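/- If ρ : A → B and σ : B → C are strict completely positive maps between C*-algebras, then the composition σ ∘ ρ : A → C is a strict completely positive map. -/

import Mathlib

/-!
Composition preserves complete positivity entrywise, so the point is strictness. With `e` an
approximate unit of `A` and `x n = ρ (e n)`, the sequence `x` is bounded and `x n * b` is Cauchy
for every `b`; it suffices that a strict CP map `σ` turns such a sequence into one with
`σ (x n) * c` Cauchy. Let `f` be an approximate unit of `B` with `σ (f l) * c → L`, and compare
`σ (x n) * c` with the Cauchy sequences `σ (x n * f k) * c`. The Schwarz inequality
`‖σ (y * v) * c‖² ≤ ‖σ (y * y⋆)‖ * ‖c⋆ * σ (v⋆ * v) * c‖`, which holds for every 2-positive map,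
applied to `v = f l - f k * f l` with `v⋆ * v ≤ f l - f l * f k * f l`, gives in the limit
`l → ∞` the bound `‖σ (x n - x n * f k) * c‖² ≤ ‖σ‖ ‖x‖² ‖c‖ ‖L - σ (f k) * c‖`, uniformly in `n`
and tending to `0` with `k`. Multiplication on the left follows by taking adjoints, since
`σ (ρ (e n))` is positive.
-/

noncomputable section

open Filter Topology

universe u

/-- A bundled right Hilbert C*-module structure over a (possibly non-unital)
C*-algebra `B` on a complete normed complex vector space `X`.  The fields record
the right `B`-action, the `B`-valued inner product, and their standard axioms,
including positivity of inner products and compatibility of the norm. -/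
structure HilbertModule (B : Type u) (X : Type u)
    [NonUnitalCStarAlgebra B] [NormedAddCommGroup X] [NormedSpace ℂ X] [CompleteSpace X] :
    Type u where
  smulR : X → B → X
  inner : X → X → B
  smulR_add : ∀ (x : X) (b c : B), smulR x (b + c) = smulR x b + smulR x c
  add_smulR : ∀ (x y : X) (b : B), smulR (x + y) b = smulR x b + smulR y b
  smulR_mul : ∀ (x : X) (b c : B), smulR x (b * c) = smulR (smulR x b) c
  smulC_smulR : ∀ (c : ℂ) (x : X) (b : B), smulR (c • x) b = c • smulR x b
  inner_add_left : ∀ x y z : X, inner (x + y) z = inner x z + inner y z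
  inner_add_right : ∀ x y z : X, inner x (y + z) = inner x y + inner x z
  inner_smulR_right : ∀ (x y : X) (b : B), inner x (smulR y b) = inner x y * b
  inner_smulC_right : ∀ (c : ℂ) (x y : X), inner x (c • y) = c • inner x y
  star_inner : ∀ x y : X, star (inner x y) = inner y x
  inner_self_pos : ∀ x : X, ∃ b : B, inner x x = star b * b
  norm_inner_self : ∀ x : X, ‖x‖ ^ 2 = ‖inner x x‖

/-- `T : X → Y` and `S : Y → X` are mutually adjoint operators between
right Hilbert `B`-modules. -/
def HilbertModule.IsAdjointPair {B X Y : Type u} [NonUnitalCStarAlgebra B]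
    [NormedAddCommGroup X] [NormedSpace ℂ X] [CompleteSpace X]
    [NormedAddCommGroup Y] [NormedSpace ℂ Y] [CompleteSpace Y]
    (hX : HilbertModule B X) (hY : HilbertModule B Y)
    (T : X → Y) (S : Y → X) : Prop :=
  ∀ (x : X) (y : Y), hY.inner (T x) y = hX.inner x (S y)

/-- Positivity in a C*-algebra, expressed as being of the form `star c * c`. -/
def IsPositiveElem {B : Type u} [NonUnitalCStarAlgebra B] (b : B) : Prop :=
  ∃ c : B, b = star c * c

/-- Positivity of a matrix over a C*-algebra. -/
def MatrixIsPositive {A : Type u} [NonUnitalCStarAlgebra A] {n : ℕ}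
    (M : Matrix (Fin n) (Fin n) A) : Prop :=
  ∃ N : Matrix (Fin n) (Fin n) A, M = N.conjTranspose * N

/-- A sequential (the algebras in question are separable) approximate unit. -/
structure IsApproxUnit {A : Type u} [NonUnitalCStarAlgebra A] (e : ℕ → A) : Prop where
  pos : ∀ n, IsPositiveElem (e n)
  norm_le_one : ∀ n, ‖e n‖ ≤ 1
  tendsto_mul_left : ∀ a : A, Tendsto (fun n => e n * a) atTop (𝓝 a)
  tendsto_mul_right : ∀ a : A, Tendsto (fun n => a * e n) atTop (𝓝 a)

/-- A completely positive map between C*-algebras: a linear map sending positive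
matrices to positive matrices at every matrix level. -/
structure IsCPMap {A B : Type u} [NonUnitalCStarAlgebra A] [NonUnitalCStarAlgebra B]
    (ρ : A → B) : Prop where
  map_add : ∀ a a', ρ (a + a') = ρ a + ρ a'
  map_smul : ∀ (c : ℂ) (a : A), ρ (c • a) = c • ρ a
  map_pos_matrix : ∀ (n : ℕ) (M : Matrix (Fin n) (Fin n) A),
    MatrixIsPositive M → MatrixIsPositive (M.map ρ)

/-- A map between C*-algebras is strict if some approximate unit of the domain is
sent to a strictly Cauchy net in the multiplier algebra of the codomain. -/
def IsStrictMap {A B : Type u} [NonUnitalCStarAlgebra A] [NonUnitalCStarAlgebra B]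
    (ρ : A → B) : Prop :=
  ∃ e : ℕ → A, IsApproxUnit e ∧
    ∀ b : B, CauchySeq (fun n => ρ (e n) * b) ∧ CauchySeq (fun n => b * ρ (e n))

/-- A completely positive map from `A` into the adjointable operators on a
right Hilbert `B`-module `X`. -/
structure IsCPAction {A B X : Type u} [NonUnitalCStarAlgebra A] [NonUnitalCStarAlgebra B]
    [NormedAddCommGroup X] [NormedSpace ℂ X] [CompleteSpace X]
    (hX : HilbertModule B X) (ρ : A → X → X) : Prop where
  map_add : ∀ a a' x, ρ (a + a') x = ρ a x + ρ a' x
  map_smul : ∀ (c : ℂ) (a : A) x, ρ (c • a) x = c • ρ a x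
  add_right : ∀ a x y, ρ a (x + y) = ρ a x + ρ a y
  adjointable : ∀ a, ∃ S, HilbertModule.IsAdjointPair hX hX (ρ a) S
  pos : ∀ (n : ℕ) (M : Matrix (Fin n) (Fin n) A), MatrixIsPositive M →
    ∀ x : Fin n → X, IsPositiveElem (∑ i, ∑ j, hX.inner (x i) (ρ (M i j) (x j)))

/-- Strictness for a completely positive map into the adjointable operators on a
Hilbert module: some approximate unit is mapped to a strictly Cauchy net. -/
def IsStrictAction {A B X : Type u} [NonUnitalCStarAlgebra A] [NonUnitalCStarAlgebra B]
    [NormedAddCommGroup X] [NormedSpace ℂ X] [CompleteSpace X]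
    (hX : HilbertModule B X) (ρ : A → X → X) : Prop :=
  ∃ e : ℕ → A, IsApproxUnit e ∧ ∃ S : ℕ → X → X,
    (∀ n, HilbertModule.IsAdjointPair hX hX (ρ (e n)) (S n)) ∧
    ∀ x, CauchySeq (fun n => ρ (e n) x) ∧ CauchySeq (fun n => S n x)

/-- A left action of `A` on a Hilbert `B`-module by adjointable operators via a
*-homomorphism, i.e. the structure of an `A`–`B`-correspondence. -/
structure IsCorrespondenceAction {A B X : Type u} [NonUnitalCStarAlgebra A]
    [NonUnitalCStarAlgebra B]
    [NormedAddCommGroup X] [NormedSpace ℂ X] [CompleteSpace X]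
    (hX : HilbertModule B X) (φ : A → X → X) : Prop where
  map_add : ∀ a a' x, φ (a + a') x = φ a x + φ a' x
  map_mul : ∀ a a' x, φ (a * a') x = φ a (φ a' x)
  map_smul : ∀ (c : ℂ) (a : A) x, φ (c • a) x = c • φ a x
  add_right : ∀ a x y, φ a (x + y) = φ a x + φ a y
  star_adjoint : ∀ a, HilbertModule.IsAdjointPair hX hX (φ a) (φ (star a))

/-- The trivial right Hilbert `B`-module structure on `B` itself. -/
def trivHM (B : Type u) [NonUnitalCStarAlgebra B] : HilbertModule B B where
  smulR b c := b * c
  inner b c := star b * c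
  smulR_add := by intros; simp [mul_add]
  add_smulR := by intros; simp [add_mul]
  smulR_mul := by intros; simp [mul_assoc]
  smulC_smulR := by intros; simp [smul_mul_assoc]
  inner_add_left := by intros; simp [star_add, add_mul]
  inner_add_right := by intros; simp [mul_add]
  inner_smulR_right := by intros; simp [mul_assoc]
  inner_smulC_right := by intros; simp [mul_smul_comm]
  star_inner := by intros; simp [star_mul, mul_assoc]
  inner_self_pos := fun b => ⟨b, rfl⟩
  norm_inner_self := by intro b; rw [CStarRing.norm_star_mul_self, pow_two]

open scoped InnerProductSpace WithCStarModule NNReal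

section CStarOrder

variable {𝒜 : Type*} [NonUnitalCStarAlgebra 𝒜] [PartialOrder 𝒜] [StarOrderedRing 𝒜]

theorem sub_mul_self_nonneg_of_norm_le_one {b : 𝒜} (hb : 0 ≤ b) (hb₁ : ‖b‖ ≤ 1) :
    0 ≤ b - b * b := by
  rw [← cfcₙ_id' ℝ b, ← cfcₙ_mul .., ← cfcₙ_sub ..]
  refine cfcₙ_nonneg fun t ht => ?_
  have ht₀ : 0 ≤ t := quasispectrum_nonneg_of_nonneg b hb t ht
  have ht₁ : t ≤ 1 := (Real.le_norm_self t).trans <|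
    (NonUnitalIsometricContinuousFunctionalCalculus.norm_quasispectrum_le b ht).trans hb₁
  nlinarith

theorem star_sub_mul_mul_sub_mul_le {p q : 𝒜} (hp : 0 ≤ p) (hp₁ : ‖p‖ ≤ 1) (hq : 0 ≤ q)
    (hq₁ : ‖q‖ ≤ 1) : star (p - q * p) * (p - q * p) ≤ p - p * q * p := by
  have hdiff : p - p * q * p - star (p - q * p) * (p - q * p)
      = (p - p * p) + star p * (q - q * q) * p := by
    simp only [star_sub, star_mul, hp.isSelfAdjoint.star_eq, hq.isSelfAdjoint.star_eq]
    noncomm_ring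
  rw [← sub_nonneg, hdiff]
  exact add_nonneg (sub_mul_self_nonneg_of_norm_le_one hp hp₁)
    (star_left_conjugate_nonneg (sub_mul_self_nonneg_of_norm_le_one hq hq₁) p)

theorem norm_sum_star_mul_sq_le {ι : Type*} [Fintype ι] (a b : ι → 𝒜) :
    ‖∑ i, star (a i) * b i‖ ^ 2 ≤ ‖∑ i, star (a i) * a i‖ * ‖∑ i, star (b i) * b i‖ := by
  let x : C⋆ᵐᵒᵈ(𝒜, ι → 𝒜) := (WithCStarModule.equiv 𝒜 _).symm fun i => star (b i)
  let y : C⋆ᵐᵒᵈ(𝒜, ι → 𝒜) := (WithCStarModule.equiv 𝒜 _).symm fun i => star (a i)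
  have hxy : ⟪x, y⟫_𝒜 = ∑ i, star (a i) * b i := by
    simp [x, y, WithCStarModule.pi_inner, WithCStarModule.inner_def]
  have hxx : ⟪x, x⟫_𝒜 = ∑ i, star (b i) * b i := by
    simp [x, WithCStarModule.pi_inner, WithCStarModule.inner_def]
  have hyy : ⟪y, y⟫_𝒜 = ∑ i, star (a i) * a i := by
    simp [y, WithCStarModule.pi_inner, WithCStarModule.inner_def]
  calc ‖∑ i, star (a i) * b i‖ ^ 2 = ‖⟪x, y⟫_𝒜‖ ^ 2 := by rw [hxy]
    _ ≤ (‖x‖ * ‖y‖) ^ 2 := by gcongr; exact CStarModule.norm_inner_le _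
    _ = ‖∑ i, star (a i) * a i‖ * ‖∑ i, star (b i) * b i‖ := by
      rw [mul_pow, CStarModule.norm_sq_eq 𝒜, CStarModule.norm_sq_eq 𝒜, hxx, hyy, mul_comm]

end CStarOrder

theorem IsPositiveElem.isSelfAdjoint {𝒜 : Type u} [NonUnitalCStarAlgebra 𝒜] {b : 𝒜}
    (hb : IsPositiveElem b) : IsSelfAdjoint b := by
  obtain ⟨c, rfl⟩ := hb
  exact .star_mul_self c

theorem isPositiveElem_iff_nonneg {𝒜 : Type u} [NonUnitalCStarAlgebra 𝒜] [PartialOrder 𝒜]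
    [StarOrderedRing 𝒜] {b : 𝒜} : IsPositiveElem b ↔ 0 ≤ b :=
  CStarAlgebra.nonneg_iff_eq_star_mul_self.symm

theorem MatrixIsPositive.norm_apply_mul_sq_le {𝒜 : Type u} [NonUnitalCStarAlgebra 𝒜] {n : ℕ}
    {M : Matrix (Fin n) (Fin n) 𝒜} (hM : MatrixIsPositive M) (i j : Fin n) (c : 𝒜) :
    ‖M i j * c‖ ^ 2 ≤ ‖M i i‖ * ‖star c * M j j * c‖ := by
  let _ := CStarAlgebra.spectralOrder 𝒜
  let _ := CStarAlgebra.spectralOrderedRing 𝒜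
  obtain ⟨N, rfl⟩ := hM
  have h := norm_sum_star_mul_sq_le (fun k => N k i) (fun k => N k j * c)
  simpa [Matrix.mul_apply, Matrix.conjTranspose_apply, Finset.sum_mul, Finset.mul_sum,
    mul_assoc] using h

theorem IsApproxUnit.tendsto_mul_mul {𝒜 : Type u} [NonUnitalCStarAlgebra 𝒜] {f : ℕ → 𝒜}
    (hf : IsApproxUnit f) (a : 𝒜) : Tendsto (fun l => f l * a * f l) atTop (𝓝 a) := by
  rw [tendsto_iff_norm_sub_tendsto_zero]
  have hbound : ∀ l, ‖f l * a * f l - a‖ ≤ ‖a * f l - a‖ + ‖f l * a - a‖ := fun l =>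
    calc ‖f l * a * f l - a‖ = ‖f l * (a * f l - a) + (f l * a - a)‖ := by noncomm_ring
      _ ≤ ‖f l‖ * ‖a * f l - a‖ + ‖f l * a - a‖ := norm_add_le_of_le (norm_mul_le _ _) le_rfl
      _ ≤ ‖a * f l - a‖ + ‖f l * a - a‖ := by
        gcongr; exact mul_le_of_le_one_left (norm_nonneg _) (hf.norm_le_one l)
  refine squeeze_zero (fun _ => norm_nonneg _) hbound ?_
  simpa using ((tendsto_iff_norm_sub_tendsto_zero.mp (hf.tendsto_mul_right a)).add
    (tendsto_iff_norm_sub_tendsto_zero.mp (hf.tendsto_mul_left a)))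

theorem cauchySeq_of_dist_le_of_tendsto {α : Type*} [PseudoMetricSpace α] {g : ℕ → α}
    {h : ℕ → ℕ → α} {δ : ℕ → ℝ} (hh : ∀ k, CauchySeq (h k))
    (hgh : ∀ k n, dist (g n) (h k n) ≤ δ k) (hδ : Tendsto δ atTop (𝓝 0)) : CauchySeq g := by
  rw [Metric.cauchySeq_iff]
  intro ε hε
  obtain ⟨k, hk⟩ := (hδ.eventually (gt_mem_nhds (by positivity : 0 < ε / 3))).exists
  obtain ⟨N, hN⟩ := Metric.cauchySeq_iff.mp (hh k) (ε / 3) (by positivity)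
  refine ⟨N, fun m hm n hn => ?_⟩
  calc dist (g m) (g n) ≤ dist (g m) (h k m) + dist (h k m) (h k n) + dist (h k n) (g n) :=
        dist_triangle4 _ _ _ _
    _ < ε / 3 + ε / 3 + ε / 3 := by
        rw [dist_comm (h k n)]
        gcongr
        exacts [(hgh k m).trans_lt hk, hN m hm n hn, (hgh k n).trans_lt hk]
    _ = ε := by ring

namespace IsCPMap

variable {A B C : Type u} [NonUnitalCStarAlgebra A] [NonUnitalCStarAlgebra B]
  [NonUnitalCStarAlgebra C] {σ : A → B}

def toLinearMap (hσ : IsCPMap σ) : A →ₗ[ℂ] B where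
  toFun := σ
  map_add' := hσ.map_add
  map_smul' := hσ.map_smul

theorem map_sub (hσ : IsCPMap σ) (a a' : A) : σ (a - a') = σ a - σ a' :=
  hσ.toLinearMap.map_sub a a'

theorem comp {τ : B → C} (hσ : IsCPMap σ) (hτ : IsCPMap τ) : IsCPMap (τ ∘ σ) where
  map_add a a' := by simp only [Function.comp_apply, hσ.map_add, hτ.map_add]
  map_smul z a := by simp only [Function.comp_apply, hσ.map_smul, hτ.map_smul]
  map_pos_matrix n M hM := by
    rw [← Matrix.map_map]
    exact hτ.map_pos_matrix n _ (hσ.map_pos_matrix n M hM)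

theorem isPositiveElem_map (hσ : IsCPMap σ) {a : A} (ha : IsPositiveElem a) :
    IsPositiveElem (σ a) := by
  obtain ⟨c, rfl⟩ := ha
  obtain ⟨N, hN⟩ := hσ.map_pos_matrix 1 (Matrix.of fun _ _ => star c * c)
    ⟨Matrix.of fun _ _ => c, by ext; simp [Matrix.mul_apply, Matrix.conjTranspose_apply]⟩
  refine ⟨N 0 0, ?_⟩
  simpa [Matrix.mul_apply, Matrix.conjTranspose_apply] using congrFun (congrFun hN 0) 0

def toPositiveLinearMap [PartialOrder A] [StarOrderedRing A] [PartialOrder B]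
    [StarOrderedRing B] (hσ : IsCPMap σ) : A →ₚ[ℂ] B :=
  .mk₀ hσ.toLinearMap fun _ ha => isPositiveElem_iff_nonneg.mp <|
    hσ.isPositiveElem_map (isPositiveElem_iff_nonneg.mpr ha)

theorem exists_norm_apply_le (hσ : IsCPMap σ) : ∃ M : ℝ≥0, ∀ a, ‖σ a‖ ≤ M * ‖a‖ := by
  let _ := CStarAlgebra.spectralOrder A
  let _ := CStarAlgebra.spectralOrderedRing A
  let _ := CStarAlgebra.spectralOrder B
  let _ := CStarAlgebra.spectralOrderedRing B
  exact hσ.toPositiveLinearMap.exists_norm_apply_le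

theorem continuous (hσ : IsCPMap σ) : Continuous σ := by
  obtain ⟨M, hM⟩ := hσ.exists_norm_apply_le
  exact AddMonoidHomClass.continuous_of_bound hσ.toLinearMap M hM

theorem norm_map_mul_mul_sq_le (hσ : IsCPMap σ) (u v : A) (c : B) :
    ‖σ (u * v) * c‖ ^ 2 ≤ ‖σ (u * star u)‖ * ‖star c * σ (star v * v) * c‖ := by
  -- `Nᴴ * N = !![u * star u, u * v; star v * star u, star v * v]`
  let N : Matrix (Fin 2) (Fin 2) A := !![star u, v; 0, 0]
  have h := (hσ.map_pos_matrix 2 (N.conjTranspose * N) ⟨N, rfl⟩).norm_apply_mul_sq_le 0 1 c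
  simpa [N, Matrix.mul_apply, Matrix.conjTranspose_apply] using h

theorem norm_map_sub_mul_mul_sq_le (hσ : IsCPMap σ) {f : ℕ → A} (hf : IsApproxUnit f)
    {c L : B} (hL : Tendsto (fun l => σ (f l) * c) atTop (𝓝 L)) (y : A) (k : ℕ) :
    ‖σ (y - y * f k) * c‖ ^ 2 ≤ ‖σ (y * star y)‖ * (‖c‖ * ‖L - σ (f k) * c‖) := by
  let _ := CStarAlgebra.spectralOrder A
  let _ := CStarAlgebra.spectralOrderedRing A
  let _ := CStarAlgebra.spectralOrder B
  let _ := CStarAlgebra.spectralOrderedRing B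
  have hf₀ : ∀ l, 0 ≤ f l := fun l => isPositiveElem_iff_nonneg.mp (hf.pos l)
  let v : ℕ → A := fun l => f l - f k * f l
  have hschwarz : ∀ l, ‖σ (y * v l) * c‖ ^ 2
      ≤ ‖σ (y * star y)‖ * ‖star c * σ (f l - f l * f k * f l) * c‖ := by
    intro l
    refine (hσ.norm_map_mul_mul_sq_le y (v l) c).trans ?_
    gcongr
    refine CStarAlgebra.norm_le_norm_of_nonneg_of_le
      (star_left_conjugate_nonneg (hσ.toPositiveLinearMap.map_nonneg (star_mul_self_nonneg _)) c)
      (star_left_conjugate_le_conjugate (OrderHomClass.mono hσ.toPositiveLinearMap ?_) c)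
    exact star_sub_mul_mul_sub_mul_le (hf₀ l) (hf.norm_le_one l) (hf₀ k) (hf.norm_le_one k)
  have hleft : Tendsto (fun l => ‖σ (y * v l) * c‖ ^ 2) atTop
      (𝓝 (‖σ (y - y * f k) * c‖ ^ 2)) := by
    have hyv : Tendsto (fun l => y * v l) atTop (𝓝 (y - y * f k)) := by
      simp only [v, mul_sub, ← mul_assoc]
      exact (hf.tendsto_mul_right y).sub (hf.tendsto_mul_right (y * f k))
    exact (((hσ.continuous.tendsto _).comp hyv).mul_const c).norm.pow 2
  have hright : Tendsto (fun l => ‖σ (y * star y)‖ * ‖star c * σ (f l - f l * f k * f l) * c‖)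
      atTop (𝓝 (‖σ (y * star y)‖ * ‖star c * (L - σ (f k) * c)‖)) := by
    have hsplit : ∀ l, star c * σ (f l - f l * f k * f l) * c
        = star c * (σ (f l) * c - σ (f l * f k * f l) * c) := by
      intro l
      rw [hσ.map_sub, mul_assoc, sub_mul]
    simp only [hsplit]
    exact ((hL.sub (((hσ.continuous.tendsto _).comp (hf.tendsto_mul_mul (f k))).mul_const c)
      ).const_mul (star c)).norm.const_mul _
  calc ‖σ (y - y * f k) * c‖ ^ 2 ≤ ‖σ (y * star y)‖ * ‖star c * (L - σ (f k) * c)‖ :=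
        le_of_tendsto_of_tendsto' hleft hright hschwarz
    _ ≤ ‖σ (y * star y)‖ * (‖c‖ * ‖L - σ (f k) * c‖) := by
        gcongr
        exact (norm_mul_le _ _).trans_eq (by rw [norm_star])

theorem cauchySeq_map_mul_of_isStrictMap (hσ : IsCPMap σ) (hσs : _root_.IsStrictMap σ)
    {x : ℕ → A} {R : ℝ} (hxR : ∀ n, ‖x n‖ ≤ R) (hx : ∀ a, CauchySeq fun n => x n * a) (c : B) :
    CauchySeq fun n => σ (x n) * c := by
  obtain ⟨f, hf, hσf⟩ := hσs
  obtain ⟨L, hL⟩ := cauchySeq_tendsto_of_complete (hσf c).1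
  obtain ⟨M, hM⟩ := hσ.exists_norm_apply_le
  refine cauchySeq_of_dist_le_of_tendsto (h := fun k n => σ (x n * f k) * c)
    (δ := fun k => √(M * R ^ 2 * (‖c‖ * ‖L - σ (f k) * c‖))) (fun k => ?_) (fun k n => ?_) ?_
  · obtain ⟨z, hz⟩ := cauchySeq_tendsto_of_complete (hx (f k))
    exact (((hσ.continuous.tendsto z).comp hz).mul_const c).cauchySeq
  · rw [dist_eq_norm, ← sub_mul, ← hσ.map_sub, Real.le_sqrt (norm_nonneg _) (by positivity)]
    refine (hσ.norm_map_sub_mul_mul_sq_le hf hL (x n) k).trans ?_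
    gcongr
    calc ‖σ (x n * star (x n))‖ ≤ M * ‖x n * star (x n)‖ := hM _
      _ = M * ‖x n‖ ^ 2 := by rw [CStarRing.norm_self_mul_star, sq]
      _ ≤ M * R ^ 2 := by gcongr; exact hxR n
  · have hLf : Tendsto (fun k => ‖L - σ (f k) * c‖) atTop (𝓝 0) := by
      simpa using (hL.const_sub L).norm
    simpa using ((hLf.const_mul ‖c‖).const_mul (M * R ^ 2)).sqrt

end IsCPMap

/-- If `ρ : A → B` and `σ : B → C` are strict completely positive
maps between C*-algebras, then `σ ∘ ρ : A → C` is a strict completely positive map. -/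
theorem comp_strict_cp {A B C : Type u}
    [NonUnitalCStarAlgebra A] [NonUnitalCStarAlgebra B] [NonUnitalCStarAlgebra C]
    (ρ : A → B) (σ : B → C)
    (hρcp : IsCPMap ρ) (hρstrict : _root_.IsStrictMap ρ)
    (hσcp : IsCPMap σ) (hσstrict : _root_.IsStrictMap σ) :
    IsCPMap (σ ∘ ρ) ∧ _root_.IsStrictMap (σ ∘ ρ) := by
  refine ⟨hρcp.comp hσcp, ?_⟩
  obtain ⟨e, he, hρe⟩ := hρstrict
  obtain ⟨M, hM⟩ := hρcp.exists_norm_apply_le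
  have hright : ∀ c : C, CauchySeq fun n => σ (ρ (e n)) * c :=
    hσcp.cauchySeq_map_mul_of_isStrictMap hσstrict
      (fun n => (hM _).trans (mul_le_of_le_one_right M.2 (he.norm_le_one n))) (fun b => (hρe b).1)
  refine ⟨e, he, fun c => ⟨hright c, ?_⟩⟩
  have hsa : ∀ n, IsSelfAdjoint (σ (ρ (e n))) := fun n =>
    (hσcp.isPositiveElem_map (hρcp.isPositiveElem_map (he.pos n))).isSelfAdjoint
  have hstar : (fun n => c * (σ ∘ ρ) (e n)) = fun n => star (σ (ρ (e n)) * star c) := by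
    funext n
    simp [star_mul, (hsa n).star_eq]
  rw [hstar]
  exact star_isometry.uniformContinuous.comp_cauchySeq (hright (star c))
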